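/- There exists an absolute constant K > 0 such that the following holds. Let α > 0, β ∈ (0,1), ε_∞ > 0, ε_F > 0, and let C, Ĉ ∈ ℂ^{M×M} be Hermitian matrices with min_i [C]_{i,i} ≥ α, min_i [Ĉ]_{i,i} ≥ α/2, such that for all i ≠ j both |[diag(C)^{−1/2} C diag(C)^{−1/2}]_{i,j}| ≤ 1 − β/2 and |[diag(Ĉ)^{−1/2} Ĉ diag(Ĉ)^{−1/2}]_{i,j}| ≤ 1 − β/2, and such that ‖Ĉ − C‖_∞ ≤ ε_∞ and ‖Ĉ − C‖_F ≤ ε_F. Then ‖P_arcsine(Ĉ) − P_arcsine(C)‖_F ≤ K·β^{−1/2}·(α^{−2}·‖C‖_F·ε_∞ + (α^{−2}·ε_∞ + α^{−1})·ε_F). -/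

import Mathlib

open MeasureTheory ProbabilityTheory Matrix
open scoped ComplexOrder

noncomputable section

/-- Entrywise maximum-modulus norm of a complex matrix. -/
def maxNorm {M : ℕ} (A : Matrix (Fin M) (Fin M) ℂ) : ℝ :=
  ⨆ i, ⨆ j, ‖A i j‖

/-- Frobenius norm of a complex matrix. -/
def frobNorm {M : ℕ} (A : Matrix (Fin M) (Fin M) ℂ) : ℝ :=
  Real.sqrt (∑ i, ∑ j, ‖A i j‖ ^ 2)

/-- Spectral (operator) norm of a complex matrix. -/
def specNorm {M : ℕ} (A : Matrix (Fin M) (Fin M) ℂ) : ℝ :=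
  ‖Matrix.toEuclideanCLM (𝕜 := ℂ) (n := Fin M) A‖

/-- diag(C)^{-1/2}: the diagonal matrix with entries [C]_{ii}^{-1/2}. -/
def dInvSqrt {M : ℕ} (C : Matrix (Fin M) (Fin M) ℂ) : Matrix (Fin M) (Fin M) ℂ :=
  Matrix.diagonal fun i => ((Real.sqrt (C i i).re)⁻¹ : ℂ)

/-- Bussgang gain A = sqrt(2/π)·diag(C)^{-1/2}. -/
def busA {M : ℕ} (C : Matrix (Fin M) (Fin M) ℂ) : Matrix (Fin M) (Fin M) ℂ :=
  (Real.sqrt (2 / Real.pi) : ℂ) • dInvSqrt C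

/-- The arcsine-law map P_arcsine(C) = (2/π)[arcsin(D^{-1/2} Re(C) D^{-1/2}) + i·arcsin(D^{-1/2} Im(C) D^{-1/2})]. -/
def arcsineMap {M : ℕ} (C : Matrix (Fin M) (Fin M) ℂ) : Matrix (Fin M) (Fin M) ℂ :=
  Matrix.of fun i j =>
    ((2 / Real.pi : ℝ) : ℂ) *
      ((Real.arcsin ((C i j).re / (Real.sqrt (C i i).re * Real.sqrt (C j j).re)) : ℝ) +
        Complex.I *
          ((Real.arcsin ((C i j).im / (Real.sqrt (C i i).re * Real.sqrt (C j j).re)) : ℝ) : ℂ))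

/-- one-bit sign quantizer: sign(x) = 1 if x ≥ 0, else -1. -/
def rsign (x : ℝ) : ℝ := if 0 ≤ x then 1 else -1

/-- one-bit complex quantization with dithers: sign(Re(y)+τ^R) + i·sign(Im(y)+τ^I). -/
def quant {M : ℕ} (yv : Fin M → ℂ) (tR tI : Fin M → ℝ) : Fin M → ℂ :=
  fun i => (rsign ((yv i).re + tR i) : ℂ) + Complex.I * (rsign ((yv i).im + tI i) : ℂ)

/-- dithered covariance estimator Ĉ = ½ C̃ + ½ C̃ᴴ with C̃ = (λ²/N) Σ r_n r̃_nᴴ. -/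
def ditherEst {M N : ℕ} (lam : ℝ) (r rt : Fin N → Fin M → ℂ) : Matrix (Fin M) (Fin M) ℂ :=
  ((1 : ℂ)/2) • (Matrix.of (fun i j => ((lam ^ 2 / N : ℝ) : ℂ) * ∑ n, r n i * (starRingEnd ℂ) (rt n j))
    + (Matrix.of (fun i j => ((lam ^ 2 / N : ℝ) : ℂ) * ∑ n, r n i * (starRingEnd ℂ) (rt n j)))ᴴ)

/-- the uniform probability measure on [-λ, λ]. -/
def unifIcc (lam : ℝ) : Measure ℝ :=
  (ENNReal.ofReal (2 * lam))⁻¹ • (volume.restrict (Set.Icc (-lam) lam))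

/-- S-subgaussian coordinates: (E|Re(y)_j|^p)^{1/p}, (E|Im(y)_j|^p)^{1/p} ≤ S √p ‖C_y‖_∞^{1/2} for p ≥ 2. -/
def SubgaussianCoords {Ω : Type} [MeasureSpace Ω] {M : ℕ} (S : ℝ)
    (y : Ω → Fin M → ℂ) (Cy : Matrix (Fin M) (Fin M) ℂ) : Prop :=
  ∀ (p : ℝ), 2 ≤ p → ∀ j : Fin M,
    (∫ ω, |(y ω j).re| ^ p) ^ (1/p) ≤ S * Real.sqrt p * Real.sqrt (maxNorm Cy) ∧
    (∫ ω, |(y ω j).im| ^ p) ^ (1/p) ≤ S * Real.sqrt p * Real.sqrt (maxNorm Cy)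

/-! Off the diagonal, the normalized entries of `C` and `Chat` lie in the disc of radius
`c = 1 - β/2`, on whose real diameter `arcsin` is `1/√(1 - c²)`-Lipschitz, and
`1/√(1 - c²) ≤ 2/√β`. The diagonals are at least `α/2` and move by at most `ε_∞`, so the
normalization `D^{-1/2} · D^{-1/2}` moves the `(i, j)` entry by at most
`(2/α)|Chat_ij - C_ij| + (4ε_∞/α²)|C_ij|`. On the diagonal both arcsine maps equal `1`, since
Hermitian matrices have real diagonals. Minkowski's inequality in the Frobenius norm sums up
the entrywise bounds. -/

open Real Complex in
def arcsineLaw (z : ℂ) : ℂ :=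
  ((2 / π : ℝ) : ℂ) * ((arcsin z.re : ℂ) + I * (arcsin z.im : ℂ))

lemma abs_arcsin_sub_arcsin_le {a b c : ℝ} (hc : c < 1) (ha : |a| ≤ c) (hb : |b| ≤ c) :
    |Real.arcsin a - Real.arcsin b| ≤ 1 / √(1 - c ^ 2) * |a - b| := by
  have hc2 : 0 < 1 - c ^ 2 := by nlinarith [abs_nonneg a]
  have hderiv : ∀ x ∈ Set.Icc (-c) c,
      HasDerivWithinAt Real.arcsin (1 / √(1 - x ^ 2)) (Set.Icc (-c) c) x := fun x hx =>
    (Real.hasDerivAt_arcsin (by linarith [hx.1]) (by linarith [hx.2])).hasDerivWithinAt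
  have hbound : ∀ x ∈ Set.Icc (-c) c, ‖1 / √(1 - x ^ 2)‖ ≤ 1 / √(1 - c ^ 2) := by
    intro x hx
    rw [Real.norm_of_nonneg (by positivity)]
    exact one_div_le_one_div_of_le (Real.sqrt_pos.2 hc2)
      (Real.sqrt_le_sqrt (by nlinarith [hx.1, hx.2]))
  simpa [Real.norm_eq_abs] using (convex_Icc (-c) c).norm_image_sub_le_of_norm_hasDerivWithin_le
    hderiv hbound (abs_le.1 hb) (abs_le.1 ha)

lemma norm_arcsineLaw_sub_le {c : ℝ} (hc : c < 1) {z w : ℂ} (hz : ‖z‖ ≤ c) (hw : ‖w‖ ≤ c) :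
    ‖arcsineLaw z - arcsineLaw w‖ ≤ 2 / √(1 - c ^ 2) * ‖z - w‖ := by
  have hre := abs_arcsin_sub_arcsin_le hc ((Complex.abs_re_le_norm z).trans hz)
    ((Complex.abs_re_le_norm w).trans hw)
  have him := abs_arcsin_sub_arcsin_le hc ((Complex.abs_im_le_norm z).trans hz)
    ((Complex.abs_im_le_norm w).trans hw)
  have hπ : ‖((2 / Real.pi : ℝ) : ℂ)‖ ≤ 1 := by
    rw [Complex.norm_real, Real.norm_of_nonneg (by positivity), div_le_one Real.pi_pos]
    linarith [Real.pi_gt_three]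
  have hsplit : ‖(((Real.arcsin z.re - Real.arcsin w.re : ℝ) : ℂ) +
      Complex.I * ((Real.arcsin z.im - Real.arcsin w.im : ℝ) : ℂ))‖ ≤
      |Real.arcsin z.re - Real.arcsin w.re| + |Real.arcsin z.im - Real.arcsin w.im| := by
    refine (norm_add_le _ _).trans_eq ?_
    rw [norm_mul, Complex.norm_I, one_mul, Complex.norm_real, Complex.norm_real,
      Real.norm_eq_abs, Real.norm_eq_abs]
  calc ‖arcsineLaw z - arcsineLaw w‖
      = ‖((2 / Real.pi : ℝ) : ℂ)‖ * ‖(((Real.arcsin z.re - Real.arcsin w.re : ℝ) : ℂ) +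
          Complex.I * ((Real.arcsin z.im - Real.arcsin w.im : ℝ) : ℂ))‖ := by
        rw [← norm_mul, arcsineLaw, arcsineLaw]
        push_cast
        ring_nf
    _ ≤ 1 * (|Real.arcsin z.re - Real.arcsin w.re| + |Real.arcsin z.im - Real.arcsin w.im|) := by
        gcongr
    _ ≤ 1 / √(1 - c ^ 2) * |(z - w).re| + 1 / √(1 - c ^ 2) * |(z - w).im| := by
        rw [Complex.sub_re, Complex.sub_im]
        linarith
    _ ≤ 1 / √(1 - c ^ 2) * ‖z - w‖ + 1 / √(1 - c ^ 2) * ‖z - w‖ := by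
        gcongr
        exacts [Complex.abs_re_le_norm _, Complex.abs_im_le_norm _]
    _ = 2 / √(1 - c ^ 2) * ‖z - w‖ := by ring

lemma abs_sqrt_sub_sqrt_le {a r : ℝ} (ha : 0 ≤ a) (hr : 0 < r) :
    |√a - √r| ≤ |a - r| / √r := by
  have hprod : (√a - √r) * (√a + √r) = a - r := by
    linear_combination Real.mul_self_sqrt ha - Real.mul_self_sqrt hr.le
  rw [le_div_iff₀ (Real.sqrt_pos.2 hr), ← hprod, abs_mul,
    abs_of_nonneg (add_nonneg (Real.sqrt_nonneg a) (Real.sqrt_nonneg r))]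
  gcongr
  linarith [Real.sqrt_nonneg a]

lemma le_sqrt_mul_sqrt {c a b : ℝ} (hc : 0 ≤ c) (ha : c ≤ a) (hb : c ≤ b) : c ≤ √a * √b :=
  calc c = √c * √c := (Real.mul_self_sqrt hc).symm
    _ ≤ √a * √b := by gcongr

lemma abs_sqrt_sub_sqrt_div_le {α ε a r p : ℝ} (hα : 0 < α) (ha : 0 ≤ a) (hr : α ≤ r)
    (hp : α / 2 ≤ p) (har : |a - r| ≤ ε) :
    |(√r - √a) / (p * √r)| ≤ 2 * ε / α ^ 2 := by
  have hr0 : 0 < √r := Real.sqrt_pos.2 (hα.trans_le hr)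
  have hp0 : 0 < p := by linarith
  have hε : 0 ≤ ε := (abs_nonneg _).trans har
  rw [abs_div, abs_of_pos (by positivity : 0 < p * √r), abs_sub_comm]
  calc |√a - √r| / (p * √r) ≤ ε / √r / (p * √r) := by
        gcongr
        exact (abs_sqrt_sub_sqrt_le ha (hα.trans_le hr)).trans (by gcongr)
    _ = ε / (p * r) := by
        rw [div_div, mul_comm p, ← mul_assoc, Real.mul_self_sqrt (hα.le.trans hr), mul_comm]
    _ ≤ ε / (α / 2 * α) := by gcongr
    _ = 2 * ε / α ^ 2 := by field_simp

lemma abs_inv_sqrt_mul_sqrt_sub_le {α ε a b r s : ℝ} (hα : 0 < α) (ha : α / 2 ≤ a)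
    (hb : α / 2 ≤ b) (hr : α ≤ r) (hs : α ≤ s) (har : |a - r| ≤ ε) (hbs : |b - s| ≤ ε) :
    |(√a * √b)⁻¹ - (√r * √s)⁻¹| ≤ 4 * ε / α ^ 2 := by
  have hsqrt_pos : ∀ {x}, α / 2 ≤ x → 0 < √x := fun hx => Real.sqrt_pos.2 (by linarith)
  have hA := hsqrt_pos ha
  have hB := hsqrt_pos hb
  have hR := hsqrt_pos (by linarith : α / 2 ≤ r)
  have hS := hsqrt_pos (by linarith : α / 2 ≤ s)
  have hsplit : (√a * √b)⁻¹ - (√r * √s)⁻¹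
      = (√r - √a) / ((√a * √b) * √r) + (√s - √b) / ((√b * √r) * √s) := by
    field_simp
    ring
  have h₁ := abs_sqrt_sub_sqrt_div_le hα (by linarith) hr
    (le_sqrt_mul_sqrt (by linarith) ha hb) har
  have h₂ := abs_sqrt_sub_sqrt_div_le hα (by linarith) hs
    (le_sqrt_mul_sqrt (by linarith) hb (by linarith : α / 2 ≤ r)) hbs
  rw [hsplit]
  calc _ ≤ _ := abs_add_le _ _
    _ ≤ 2 * ε / α ^ 2 + 2 * ε / α ^ 2 := add_le_add h₁ h₂
    _ = 4 * ε / α ^ 2 := by ring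

lemma norm_div_sqrt_mul_sqrt_sub_le {α ε a b r s : ℝ} {z w : ℂ} (hα : 0 < α) (ha : α / 2 ≤ a)
    (hb : α / 2 ≤ b) (hr : α ≤ r) (hs : α ≤ s) (har : |a - r| ≤ ε) (hbs : |b - s| ≤ ε) :
    ‖z / ((√a * √b : ℝ) : ℂ) - w / ((√r * √s : ℝ) : ℂ)‖
      ≤ 2 / α * ‖z - w‖ + 4 * ε / α ^ 2 * ‖w‖ := by
  have hab : α / 2 ≤ √a * √b := le_sqrt_mul_sqrt (by linarith) ha hb
  have hdecomp : z / ((√a * √b : ℝ) : ℂ) - w / ((√r * √s : ℝ) : ℂ)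
      = (√a * √b)⁻¹ • (z - w) + ((√a * √b)⁻¹ - (√r * √s)⁻¹) • w := by
    simp only [Complex.real_smul, div_eq_mul_inv]
    push_cast
    ring
  rw [hdecomp]
  refine (norm_add_le _ _).trans ?_
  rw [norm_smul, norm_smul, Real.norm_eq_abs, Real.norm_eq_abs]
  gcongr
  · rw [abs_of_pos (inv_pos.2 (by linarith)), ← inv_div]
    exact inv_anti₀ (by positivity) hab
  · exact abs_inv_sqrt_mul_sqrt_sub_le hα ha hb hr hs har hbs

lemma sqrt_div_two_le_sqrt_one_sub_sq {β : ℝ} (hβ0 : 0 < β) (hβ : β ≤ 3) :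
    √β / 2 ≤ √(1 - (1 - β / 2) ^ 2) := by
  rw [Real.le_sqrt' (by positivity), div_pow, Real.sq_sqrt hβ0.le]
  nlinarith

section Matrix

variable {M : ℕ}

lemma norm_apply_le_maxNorm (A : Matrix (Fin M) (Fin M) ℂ) (i j : Fin M) :
    ‖A i j‖ ≤ maxNorm A :=
  have : Nonempty (Fin M) := ⟨i⟩
  (le_ciSup (Set.finite_range _).bddAbove j).trans
    (le_ciSup (f := fun i => ⨆ j, ‖A i j‖) (Set.finite_range _).bddAbove i)

lemma frobNorm_eq_norm_toLp (A : Matrix (Fin M) (Fin M) ℂ) :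
    frobNorm A = ‖(WithLp.toLp 2 fun p : Fin M × Fin M => ‖A p.1 p.2‖ :
      EuclideanSpace ℝ (Fin M × Fin M))‖ := by
  rw [EuclideanSpace.norm_eq, frobNorm, Fintype.sum_prod_type]
  simp

lemma frobNorm_le_of_norm_apply_le {E D C : Matrix (Fin M) (Fin M) ℂ} {u v : ℝ}
    (hu : 0 ≤ u) (hv : 0 ≤ v) (h : ∀ i j, ‖E i j‖ ≤ u * ‖D i j‖ + v * ‖C i j‖) :
    frobNorm E ≤ u * frobNorm D + v * frobNorm C := by
  simp only [frobNorm_eq_norm_toLp]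
  set d : EuclideanSpace ℝ (Fin M × Fin M) := WithLp.toLp 2 fun p => ‖D p.1 p.2‖
  set c : EuclideanSpace ℝ (Fin M × Fin M) := WithLp.toLp 2 fun p => ‖C p.1 p.2‖
  calc _ ≤ ‖u • d + v • c‖ := by
        rw [EuclideanSpace.norm_eq, EuclideanSpace.norm_eq]
        gcongr with p
        simp only [PiLp.add_apply, PiLp.smul_apply, smul_eq_mul, d, c, Real.norm_eq_abs]
        exact abs_le_abs_of_nonneg (norm_nonneg _) (h p.1 p.2)
    _ ≤ u * ‖d‖ + v * ‖c‖ := by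
        refine (norm_add_le _ _).trans_eq ?_
        rw [norm_smul, norm_smul, Real.norm_of_nonneg hu, Real.norm_of_nonneg hv]

lemma dInvSqrt_mul_mul_dInvSqrt_apply (C : Matrix (Fin M) (Fin M) ℂ) (i j : Fin M) :
    (dInvSqrt C * C * dInvSqrt C) i j = C i j / ((√(C i i).re * √(C j j).re : ℝ) : ℂ) := by
  simp [dInvSqrt, div_eq_mul_inv]
  ring

lemma arcsineMap_apply (C : Matrix (Fin M) (Fin M) ℂ) (i j : Fin M) :
    arcsineMap C i j = arcsineLaw ((dInvSqrt C * C * dInvSqrt C) i j) := by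
  rw [arcsineMap, of_apply, arcsineLaw, dInvSqrt_mul_mul_dInvSqrt_apply, Complex.div_ofReal_re,
    Complex.div_ofReal_im]

lemma arcsineMap_apply_self {C : Matrix (Fin M) (Fin M) ℂ} (hC : C.IsHermitian) {i : Fin M}
    (hi : 0 < (C i i).re) : arcsineMap C i i = 1 := by
  have hnorm : (dInvSqrt C * C * dInvSqrt C) i i = 1 := by
    have him : (C i i).im = 0 := Complex.conj_eq_iff_im.1 (hC.apply i i)
    rw [dInvSqrt_mul_mul_dInvSqrt_apply, Real.mul_self_sqrt hi.le]
    apply Complex.ext <;> simp [him, hi.ne']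
  rw [arcsineMap_apply, hnorm, arcsineLaw]
  push_cast
  simp [Real.pi_ne_zero]

lemma norm_arcsineMap_sub_apply_le {α ε c : ℝ} {C Chat : Matrix (Fin M) (Fin M) ℂ}
    (hα : 0 < α) (hc : c < 1) (hC : C.IsHermitian) (hChat : Chat.IsHermitian)
    (hCd : ∀ i, α ≤ (C i i).re) (hChatd : ∀ i, α / 2 ≤ (Chat i i).re)
    (hCn : ∀ i j, i ≠ j → ‖(dInvSqrt C * C * dInvSqrt C) i j‖ ≤ c)
    (hChatn : ∀ i j, i ≠ j → ‖(dInvSqrt Chat * Chat * dInvSqrt Chat) i j‖ ≤ c)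
    (hmax : maxNorm (Chat - C) ≤ ε) (i j : Fin M) :
    ‖(arcsineMap Chat - arcsineMap C) i j‖
      ≤ 2 / √(1 - c ^ 2) * (2 / α * ‖(Chat - C) i j‖ + 4 * ε / α ^ 2 * ‖C i j‖) := by
  have hdiag : ∀ k, |(Chat k k).re - (C k k).re| ≤ ε := fun k => by
    simpa using
      (Complex.abs_re_le_norm _).trans ((norm_apply_le_maxNorm (Chat - C) k k).trans hmax)
  obtain rfl | hij := eq_or_ne i j
  · have hε : 0 ≤ ε := (abs_nonneg _).trans (hdiag i)
    rw [Matrix.sub_apply, arcsineMap_apply_self hChat (by linarith [hChatd i]),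
      arcsineMap_apply_self hC (by linarith [hCd i]), sub_self, norm_zero]
    positivity
  rw [Matrix.sub_apply, arcsineMap_apply, arcsineMap_apply]
  refine (norm_arcsineLaw_sub_le hc (hChatn i j hij) (hCn i j hij)).trans ?_
  gcongr
  rw [dInvSqrt_mul_mul_dInvSqrt_apply, dInvSqrt_mul_mul_dInvSqrt_apply, Matrix.sub_apply]
  exact norm_div_sqrt_mul_sqrt_sub_le hα (hChatd i) (hChatd j) (hCd i) (hCd j) (hdiag i) (hdiag j)

end Matrix

/-- Frobenius-norm stability of the arcsine-law map. -/
theorem stmt10 :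
    ∃ K : ℝ, 0 < K ∧
      ∀ (M : ℕ) (α β epsInf epsF : ℝ), 0 < α → β ∈ Set.Ioo (0:ℝ) 1 → 0 < epsInf → 0 < epsF →
      ∀ (C Chat : Matrix (Fin M) (Fin M) ℂ), C.IsHermitian → Chat.IsHermitian →
      (∀ i, α ≤ (C i i).re) → (∀ i, α / 2 ≤ (Chat i i).re) →
      (∀ i j, i ≠ j → ‖(dInvSqrt C * C * dInvSqrt C) i j‖ ≤ 1 - β/2) →
      (∀ i j, i ≠ j → ‖(dInvSqrt Chat * Chat * dInvSqrt Chat) i j‖ ≤ 1 - β/2) →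
      maxNorm (Chat - C) ≤ epsInf → frobNorm (Chat - C) ≤ epsF →
      frobNorm (arcsineMap Chat - arcsineMap C)
        ≤ K * (Real.sqrt β)⁻¹ *
            ((α ^ 2)⁻¹ * frobNorm C * epsInf + ((α ^ 2)⁻¹ * epsInf + α⁻¹) * epsF) := by
  refine ⟨16, by norm_num, ?_⟩
  intro M α β epsInf epsF hα ⟨hβ0, hβ1⟩ hεInf hεF C Chat hC hChat hCd hChatd hCn hChatn hmax hfrob
  have hL : 2 / √(1 - (1 - β / 2) ^ 2) ≤ 4 / √β := by
    calc 2 / √(1 - (1 - β / 2) ^ 2) ≤ 2 / (√β / 2) := by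
          gcongr
          exact sqrt_div_two_le_sqrt_one_sub_sq hβ0 (by linarith)
      _ = 4 / √β := by ring
  set L := 2 / √(1 - (1 - β / 2) ^ 2)
  have hC0 : 0 ≤ frobNorm C := Real.sqrt_nonneg _
  have hΔ0 : 0 ≤ frobNorm (Chat - C) := Real.sqrt_nonneg _
  calc frobNorm (arcsineMap Chat - arcsineMap C)
      ≤ L * (2 / α) * frobNorm (Chat - C) + L * (4 * epsInf / α ^ 2) * frobNorm C :=
        frobNorm_le_of_norm_apply_le (by positivity) (by positivity) fun i j =>
          (norm_arcsineMap_sub_apply_le hα (by linarith) hC hChat hCd hChatd hCn hChatn hmax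
            i j).trans_eq (by ring)
    _ ≤ 4 / √β * (2 / α) * epsF + 4 / √β * (4 * epsInf / α ^ 2) * frobNorm C := by gcongr
    _ ≤ 16 * (√β)⁻¹ *
          ((α ^ 2)⁻¹ * frobNorm C * epsInf + ((α ^ 2)⁻¹ * epsInf + α⁻¹) * epsF) := by
        have hslack : 0 ≤ 8 * epsF / (α * √β) + 16 * epsInf * epsF / (α ^ 2 * √β) := by positivity
        have hgap : 16 * (√β)⁻¹ *
            ((α ^ 2)⁻¹ * frobNorm C * epsInf + ((α ^ 2)⁻¹ * epsInf + α⁻¹) * epsF)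
            - (4 / √β * (2 / α) * epsF + 4 / √β * (4 * epsInf / α ^ 2) * frobNorm C)
            = 8 * epsF / (α * √β) + 16 * epsInf * epsF / (α ^ 2 * √β) := by
          field_simp
          ring
        linarith
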